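/- For every γ > 0, the function f_γ is convex and differentiable on ℝ^p with gradient ∇f_γ(x) = A·u*_γ(Aᵀx), and ∇f_γ is Lipschitz continuous with constant ‖A‖²/γ, where ‖A‖ is the spectral norm of A. -/

import Mathlib

/-!
Write `h := γ b + φ`, real-valued on the convex set `S := U ∩ dom φ`, and
`F z := ⟪z, u z⟫ - h (u z)` (this is `φ*_γ` for `u = u*_γ`). Since `h - ⟪z, ·⟫` is `γ`-strongly
convex on `S` and minimised at `u z`, it grows at least like `γ/2 ‖v - u z‖²` away from `u z`.
Adding these growth bounds at `z` and `z'` gives `γ ‖u z - u z'‖² ≤ ⟪z - z', u z - u z'⟫`, so `u`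
is `γ⁻¹`-Lipschitz. Minimality alone gives `F z + ⟪u z, z' - z⟫ ≤ F z' ≤ F z + ⟪u z', z' - z⟫`:
the left inequality makes `F` convex, and with the Lipschitz bound both sandwich
`F z' - F z - ⟪u z, z' - z⟫` in `[0, ‖z' - z‖² / γ]`, so `∇F = u`. Composing with `Aᵀ`, whose
norm is `‖A‖`, gives the theorem.
-/

open scoped RealInnerProductSpace BigOperators

open Set Filter Topology

section StrongConvexity

variable {E : Type*} [NormedAddCommGroup E] [NormedSpace ℝ E] {s t : Set E} {m c : ℝ} {f g : E → ℝ}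

lemma StrongConvexOn.subset (hf : StrongConvexOn s m f) (hts : t ⊆ s) (ht : Convex ℝ t) :
    StrongConvexOn t m f :=
  ⟨ht, fun _ hx _ hy _ _ ha hb hab => hf.2 (hts hx) (hts hy) ha hb hab⟩

lemma StrongConvexOn.add_convexOn (hf : StrongConvexOn s m f) (hg : ConvexOn ℝ s g) :
    StrongConvexOn s m (f + g) := by
  have := hf.add hg.uniformConvexOn_zero
  rwa [add_zero] at this

lemma StrongConvexOn.const_mul (hc : 0 ≤ c) (hf : StrongConvexOn s m f) :
    StrongConvexOn s (c * m) fun x => c * f x := by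
  refine ⟨hf.1, fun x hx y hy a b ha hb hab => ?_⟩
  have := mul_le_mul_of_nonneg_left (hf.2 hx hy ha hb hab) hc
  simp only [smul_eq_mul] at this ⊢
  linarith

lemma StrongConvexOn.mul_sq_norm_sub_le_of_isMinOn {u v : E} (hf : StrongConvexOn s m f)
    (hmin : IsMinOn f s u) (hu : u ∈ s) (hv : v ∈ s) :
    m / 2 * ‖v - u‖ ^ 2 ≤ f v - f u := by
  -- Comparing `f u` with `f (a • u + (1 - a) • v)` only yields the factor `a`; let `a → 1`.
  have hscaled : ∀ a ∈ Ioo (0 : ℝ) 1, a * (m / 2 * ‖v - u‖ ^ 2) ≤ f v - f u := by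
    rintro a ⟨ha0, ha1⟩
    have hmid := hf.2 hu hv ha0.le (sub_nonneg.2 ha1.le) (add_sub_cancel a 1)
    have hle := hmin (hf.1 hu hv ha0.le (sub_nonneg.2 ha1.le) (add_sub_cancel a 1))
    simp only [mem_ofPred_eq, smul_eq_mul, norm_sub_rev u v] at hmid hle
    have : (1 - a) * (a * (m / 2 * ‖v - u‖ ^ 2)) ≤ (1 - a) * (f v - f u) := by nlinarith
    exact le_of_mul_le_mul_left this (sub_pos.2 ha1)
  have hlim : Tendsto (fun a : ℝ => a * (m / 2 * ‖v - u‖ ^ 2)) (𝓝[<] 1)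
      (𝓝 (m / 2 * ‖v - u‖ ^ 2)) :=
    ((continuous_mul_const _).tendsto' 1 _ (one_mul _)).mono_left nhdsWithin_le_nhds
  exact le_of_tendsto hlim (eventually_of_mem (Ioo_mem_nhdsLT one_pos) hscaled)

end StrongConvexity

section InnerProduct

variable {E : Type*} [NormedAddCommGroup E] [InnerProductSpace ℝ E] {s : Set E} {m : ℝ} {f : E → ℝ}

lemma StrongConvexOn.sub_inner (hf : StrongConvexOn s m f) (z : E) :
    StrongConvexOn s m fun v => f v - ⟪z, v⟫ := by
  convert hf.add_convexOn ((-(innerₛₗ ℝ z)).convexOn hf.1) using 1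
  ext v
  simp [sub_eq_add_neg]

lemma convexOn_univ_of_le_add_inner {g : E → E} (h : ∀ x y, f x + ⟪g x, y - x⟫ ≤ f y) :
    ConvexOn ℝ univ f := by
  refine ⟨convex_univ, fun x _ y _ a b ha hb hab => ?_⟩
  set w := a • x + b • y
  have hx := mul_le_mul_of_nonneg_left (h w x) ha
  have hy := mul_le_mul_of_nonneg_left (h w y) hb
  have hw : a * ⟪g w, x - w⟫ + b * ⟪g w, y - w⟫ = 0 := by
    rw [← real_inner_smul_right, ← real_inner_smul_right, ← inner_add_right, smul_sub, smul_sub,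
      sub_add_sub_comm, ← add_smul, hab, one_smul, sub_self, inner_zero_right]
  have hfw : f w = a * f w + b * f w := by rw [← add_mul, hab, one_mul]
  simp only [smul_eq_mul]
  linarith

lemma hasGradientAt_of_abs_sub_inner_le [CompleteSpace E] {g x : E} (C : ℝ)
    (h : ∀ y, |f y - f x - ⟪g, y - x⟫| ≤ C * ‖y - x‖ ^ 2) : HasGradientAt f g x := by
  rw [hasGradientAt_iff_isLittleO]
  have hsq : (fun y => ‖y - x‖ ^ 2) =o[𝓝 x] fun y => y - x :=
    (Asymptotics.isLittleO_norm_pow_id one_lt_two).comp_tendsto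
      (tendsto_sub_nhds_zero_iff.2 tendsto_id)
  refine (Asymptotics.IsBigO.of_bound C (Eventually.of_forall fun y => ?_)).trans_isLittleO hsq
  simpa only [Real.norm_eq_abs, abs_pow, abs_norm] using h y

end InnerProduct

section Conjugate

variable {E : Type*} [NormedAddCommGroup E] [InnerProductSpace ℝ E] {s : Set E} {h : E → ℝ}
  {u : E → E} {γ : ℝ}

noncomputable def conjugateValue (h : E → ℝ) (u : E → E) (z : E) : ℝ := ⟪z, u z⟫ - h (u z)

lemma conjugateValue_add_inner_le (hu : ∀ z, u z ∈ s)
    (hmin : ∀ z, IsMinOn (fun v => h v - ⟪z, v⟫) s (u z)) (z z' : E) :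
    conjugateValue h u z + ⟪u z, z' - z⟫ ≤ conjugateValue h u z' := by
  have := hmin z' (hu z)
  simp only [mem_ofPred_eq] at this
  rw [conjugateValue, conjugateValue, inner_sub_right, real_inner_comm z' (u z),
    real_inner_comm z (u z)]
  linarith

lemma mul_sq_norm_sub_le_inner_of_isMinOn (hh : StrongConvexOn s γ h) (hu : ∀ z, u z ∈ s)
    (hmin : ∀ z, IsMinOn (fun v => h v - ⟪z, v⟫) s (u z)) (z z' : E) :
    γ * ‖u z - u z'‖ ^ 2 ≤ ⟪z - z', u z - u z'⟫ := by
  have h₁ := (hh.sub_inner z).mul_sq_norm_sub_le_of_isMinOn (hmin z) (hu z) (hu z')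
  have h₂ := (hh.sub_inner z').mul_sq_norm_sub_le_of_isMinOn (hmin z') (hu z') (hu z)
  rw [norm_sub_rev] at h₁
  simp only [inner_sub_left, inner_sub_right] at h₁ h₂ ⊢
  linarith

lemma norm_sub_le_div_of_isMinOn (hh : StrongConvexOn s γ h) (hγ : 0 < γ) (hu : ∀ z, u z ∈ s)
    (hmin : ∀ z, IsMinOn (fun v => h v - ⟪z, v⟫) s (u z)) (z z' : E) :
    ‖u z - u z'‖ ≤ ‖z - z'‖ / γ := by
  rw [le_div_iff₀ hγ]
  rcases (norm_nonneg (u z - u z')).eq_or_lt with h0 | h0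
  · rw [← h0, zero_mul]
    exact norm_nonneg _
  · refine le_of_mul_le_mul_right ?_ h0
    calc ‖u z - u z'‖ * γ * ‖u z - u z'‖ = γ * ‖u z - u z'‖ ^ 2 := by ring
      _ ≤ ⟪z - z', u z - u z'⟫ := mul_sq_norm_sub_le_inner_of_isMinOn hh hu hmin z z'
      _ ≤ ‖z - z'‖ * ‖u z - u z'‖ := real_inner_le_norm _ _

lemma lipschitzWith_of_isMinOn (hh : StrongConvexOn s γ h) (hγ : 0 < γ) (hu : ∀ z, u z ∈ s)
    (hmin : ∀ z, IsMinOn (fun v => h v - ⟪z, v⟫) s (u z)) :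
    LipschitzWith (Real.toNNReal γ⁻¹) u := by
  refine LipschitzWith.of_dist_le_mul fun z z' => ?_
  rw [dist_eq_norm, dist_eq_norm, Real.coe_toNNReal _ (inv_nonneg.2 hγ.le), inv_mul_eq_div]
  exact norm_sub_le_div_of_isMinOn hh hγ hu hmin z z'

lemma convexOn_conjugateValue (hu : ∀ z, u z ∈ s)
    (hmin : ∀ z, IsMinOn (fun v => h v - ⟪z, v⟫) s (u z)) :
    ConvexOn ℝ univ (conjugateValue h u) :=
  convexOn_univ_of_le_add_inner (conjugateValue_add_inner_le hu hmin)

lemma hasGradientAt_conjugateValue [CompleteSpace E] (hh : StrongConvexOn s γ h) (hγ : 0 < γ)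
    (hu : ∀ z, u z ∈ s) (hmin : ∀ z, IsMinOn (fun v => h v - ⟪z, v⟫) s (u z)) (z : E) :
    HasGradientAt (conjugateValue h u) (u z) z := by
  refine hasGradientAt_of_abs_sub_inner_le γ⁻¹ fun z' => abs_le.2 ⟨?_, ?_⟩
  · have := conjugateValue_add_inner_le hu hmin z z'
    have : 0 ≤ γ⁻¹ * ‖z' - z‖ ^ 2 := by positivity
    linarith
  · have hle := conjugateValue_add_inner_le hu hmin z' z
    have hcs : ⟪u z' - u z, z' - z⟫ ≤ γ⁻¹ * ‖z' - z‖ ^ 2 :=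
      calc ⟪u z' - u z, z' - z⟫ ≤ ‖u z' - u z‖ * ‖z' - z‖ := real_inner_le_norm _ _
        _ ≤ ‖z' - z‖ / γ * ‖z' - z‖ := by
          gcongr; exact norm_sub_le_div_of_isMinOn hh hγ hu hmin z' z
        _ = γ⁻¹ * ‖z' - z‖ ^ 2 := by ring
    rw [← neg_sub z' z, inner_neg_right] at hle
    rw [inner_sub_left] at hcs
    linarith

end Conjugate

lemma HasGradientAt.comp_continuousLinearMap {F G : Type*} [NormedAddCommGroup F]
    [InnerProductSpace ℝ F] [CompleteSpace F] [NormedAddCommGroup G] [InnerProductSpace ℝ G]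
    [CompleteSpace G] {f : G → ℝ} {g : G} (B : F →L[ℝ] G) {x : F} (hf : HasGradientAt f g (B x)) :
    HasGradientAt (f ∘ B) (ContinuousLinearMap.adjoint B g) x := by
  rw [hasGradientAt_iff_hasFDerivAt] at hf ⊢
  refine (hf.comp x B.hasFDerivAt).congr_fderiv ?_
  ext y
  simp [ContinuousLinearMap.adjoint_inner_left]

lemma convexOn_toReal_of_ne_bot {E : Type*} [AddCommGroup E] [Module ℝ E] {φ : E → EReal}
    (hbot : ∀ v, φ v ≠ ⊥)
    (hcx : ∀ v w : E, ∀ a c : ℝ, 0 ≤ a → 0 ≤ c → a + c = 1 →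
      φ (a • v + c • w) ≤ (a : EReal) * φ v + (c : EReal) * φ w) :
    ConvexOn ℝ {v | φ v ≠ ⊤} fun v => (φ v).toReal := by
  have hmid : ∀ ⦃v⦄, φ v ≠ ⊤ → ∀ ⦃w⦄, φ w ≠ ⊤ → ∀ ⦃a c : ℝ⦄, 0 ≤ a → 0 ≤ c → a + c = 1 →
      φ (a • v + c • w) ≤ ((a * (φ v).toReal + c * (φ w).toReal : ℝ) : EReal) := by
    intro v hv w hw a c ha hc hac
    have := hcx v w a c ha hc hac
    rwa [← EReal.coe_toReal hv (hbot v), ← EReal.coe_toReal hw (hbot w)] at this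
  refine ⟨fun v hv w hw a c ha hc hac =>
    ne_top_of_le_ne_top (EReal.coe_ne_top _) (hmid hv hw ha hc hac),
    fun v hv w hw a c ha hc hac => ?_⟩
  have := EReal.toReal_le_toReal (hmid hv hw ha hc hac) (hbot _) (EReal.coe_ne_top _)
  rwa [EReal.toReal_coe] at this

lemma EReal.coe_sub_sub_le_coe_sub_sub_iff {a b a' b' : ℝ} {x y : EReal} (hx : x ≠ ⊤) (hx' : x ≠ ⊥)
    (hy : y ≠ ⊤) (hy' : y ≠ ⊥) :
    (a : EReal) - x - b ≤ a' - y - b' ↔ a - x.toReal - b ≤ a' - y.toReal - b' := by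
  lift x to ℝ using ⟨hx, hx'⟩
  lift y to ℝ using ⟨hy, hy'⟩
  norm_cast

theorem stmt_5_general
    {n : ℕ}
    (U : Set (EuclideanSpace ℝ (Fin n)))
    (hUcx : Convex ℝ U)
    (φ : EuclideanSpace ℝ (Fin n) → EReal)
    (hφbot : ∀ v, φ v ≠ ⊥)
    (hφcx : ∀ v w : EuclideanSpace ℝ (Fin n), ∀ a c : ℝ, 0 ≤ a → 0 ≤ c → a + c = 1 →
      φ (a • v + c • w) ≤ (a : EReal) * φ v + (c : EReal) * φ w)
    (b : EuclideanSpace ℝ (Fin n) → ℝ)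
    (hbsc : StrongConvexOn U 1 b)
    (ustar : ℝ → EuclideanSpace ℝ (Fin n) → EuclideanSpace ℝ (Fin n))
    (humem : ∀ γ > (0:ℝ), ∀ z, ustar γ z ∈ U)
    (hufin : ∀ γ > (0:ℝ), ∀ z, φ (ustar γ z) ≠ ⊤)
    (humax : ∀ γ > (0:ℝ), ∀ z, ∀ v ∈ U,
      (⟪z, v⟫ : EReal) - φ v - ((γ * b v : ℝ) : EReal)
        ≤ (⟪z, ustar γ z⟫ : EReal) - φ (ustar γ z) - ((γ * b (ustar γ z) : ℝ) : EReal))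
    (φs : ℝ → EuclideanSpace ℝ (Fin n) → ℝ)
    (hφs : ∀ γ z, φs γ z = ⟪z, ustar γ z⟫ - (φ (ustar γ z)).toReal - γ * b (ustar γ z))
    {p : ℕ}
    (A : EuclideanSpace ℝ (Fin n) →L[ℝ] EuclideanSpace ℝ (Fin p))
    :
    ∀ γ > (0:ℝ),
      ConvexOn ℝ Set.univ (fun x : EuclideanSpace ℝ (Fin p) => φs γ ((ContinuousLinearMap.adjoint A) x)) ∧
      (∀ x : EuclideanSpace ℝ (Fin p),
        HasGradientAt (fun x => φs γ ((ContinuousLinearMap.adjoint A) x)) (A (ustar γ ((ContinuousLinearMap.adjoint A) x))) x) ∧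
      LipschitzWith (Real.toNNReal (‖A‖^2 / γ))
        (fun x : EuclideanSpace ℝ (Fin p) => A (ustar γ ((ContinuousLinearMap.adjoint A) x))) := by
  intro γ hγ
  set S := U ∩ {v | φ v ≠ ⊤}
  have hψ := convexOn_toReal_of_ne_bot hφbot hφcx
  have hS : Convex ℝ S := hUcx.inter hψ.1
  have hb := (hbsc.const_mul hγ.le).subset inter_subset_left hS
  rw [mul_one] at hb
  have hh : StrongConvexOn S γ fun v => γ * b v + (φ v).toReal :=
    hb.add_convexOn (hψ.subset inter_subset_right hS)
  have hu : ∀ z, ustar γ z ∈ S := fun z => ⟨humem γ hγ z, hufin γ hγ z⟩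
  have hmin : ∀ z, IsMinOn (fun v => γ * b v + (φ v).toReal - ⟪z, v⟫) S (ustar γ z) :=
    fun z v hv => by
      have := (EReal.coe_sub_sub_le_coe_sub_sub_iff hv.2 (hφbot v) (hufin γ hγ z)
        (hφbot _)).1 (humax γ hγ z v hv.1)
      simp only [mem_ofPred_eq]
      linarith
  have hφsγ : φs γ = conjugateValue (fun v => γ * b v + (φ v).toReal) (ustar γ) :=
    funext fun z => by rw [hφs, conjugateValue]; ring
  rw [hφsγ]
  refine ⟨(convexOn_conjugateValue hu hmin).comp_linearMap _, fun x => ?_, ?_⟩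
  · have := (hasGradientAt_conjugateValue hh hγ hu hmin
      (ContinuousLinearMap.adjoint A x)).comp_continuousLinearMap
      (ContinuousLinearMap.adjoint A)
    rwa [ContinuousLinearMap.adjoint_adjoint] at this
  · have hA : ‖ContinuousLinearMap.adjoint A‖₊ = ‖A‖₊ := LinearIsometryEquiv.nnnorm_map _ _
    refine (A.lipschitz.comp ((lipschitzWith_of_isMinOn hh hγ hu hmin).comp
      (ContinuousLinearMap.adjoint A).lipschitz)).weaken (le_of_eq ?_)
    rw [hA, ← NNReal.coe_inj]
    push_cast
    rw [Real.coe_toNNReal _ (by positivity), Real.coe_toNNReal _ (by positivity)]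
    ring

theorem stmt_5
    {n : ℕ} (hn : 1 ≤ n)
    (U : Set (EuclideanSpace ℝ (Fin n)))
    (hUne : U.Nonempty) (hUcl : IsClosed U) (hUcx : Convex ℝ U)
    (φ : EuclideanSpace ℝ (Fin n) → EReal)
    (hφbot : ∀ v, φ v ≠ ⊥)
    (hφlsc : LowerSemicontinuous φ)
    (hφcx : ∀ v w : EuclideanSpace ℝ (Fin n), ∀ a c : ℝ, 0 ≤ a → 0 ≤ c → a + c = 1 →
      φ (a • v + c • w) ≤ (a : EReal) * φ v + (c : EReal) * φ w)
    (hφdom : ∃ v ∈ U, φ v ≠ ⊤)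
    (b : EuclideanSpace ℝ (Fin n) → ℝ)
    (hbcont : Continuous b)
    (hbsc : StrongConvexOn U 1 b)
    (ustar : ℝ → EuclideanSpace ℝ (Fin n) → EuclideanSpace ℝ (Fin n))
    (humem : ∀ γ > (0:ℝ), ∀ z, ustar γ z ∈ U)
    (hufin : ∀ γ > (0:ℝ), ∀ z, φ (ustar γ z) ≠ ⊤)
    (humax : ∀ γ > (0:ℝ), ∀ z, ∀ v ∈ U,
      (⟪z, v⟫ : EReal) - φ v - ((γ * b v : ℝ) : EReal)
        ≤ (⟪z, ustar γ z⟫ : EReal) - φ (ustar γ z) - ((γ * b (ustar γ z) : ℝ) : EReal))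
    (φs : ℝ → EuclideanSpace ℝ (Fin n) → ℝ)
    (hφs : ∀ γ z, φs γ z = ⟪z, ustar γ z⟫ - (φ (ustar γ z)).toReal - γ * b (ustar γ z))
    {p : ℕ} (hp : 1 ≤ p)
    (A : EuclideanSpace ℝ (Fin n) →L[ℝ] EuclideanSpace ℝ (Fin p))
    :
    ∀ γ > (0:ℝ),
      ConvexOn ℝ Set.univ (fun x : EuclideanSpace ℝ (Fin p) => φs γ ((ContinuousLinearMap.adjoint A) x)) ∧
      (∀ x : EuclideanSpace ℝ (Fin p),
        HasGradientAt (fun x => φs γ ((ContinuousLinearMap.adjoint A) x)) (A (ustar γ ((ContinuousLinearMap.adjoint A) x))) x) ∧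
      LipschitzWith (Real.toNNReal (‖A‖^2 / γ))
        (fun x : EuclideanSpace ℝ (Fin p) => A (ustar γ ((ContinuousLinearMap.adjoint A) x))) :=
  stmt_5_general U hUcx φ hφbot hφcx b hbsc ustar humem hufin humax φs hφs A
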